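/- arXiv:2603.14689 — 2 statements merged into one kernel-verified Lean document; each statement's English description precedes it below -/
import Mathlib

section
/- Assume the distribution P has full support and the action set A is nonempty, and fix a coordinate set I. Then there exists an anchor state s₀ such that OptS_I(s) = Opt(s) for every state s agreeing with s₀ on I, if and only if there exists an anchor state s₀ such that Opt(s) = Opt(s₀) for every state s agreeing with s₀ on I. -/
/-- Full-information optimizer: actions maximizing pointwise utility at state `s`. -/
def Opt {n : ℕ} {A : Type*} {X : Fin n → Type*}
    (U : A → (∀ i, X i) → ℝ) (s : ∀ i, X i) : Set A :=
  {a | ∀ b, U b s ≤ U a s}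

/-- Conditional (unnormalized) expected utility of action `a` over the `I`-fiber of `s`. -/
noncomputable def condEU {n : ℕ} {A : Type*} {X : Fin n → Type*}
    [∀ i, Fintype (X i)] [∀ i, DecidableEq (X i)]
    (U : A → (∀ i, X i) → ℝ) (P : (∀ i, X i) → ℝ)
    (I : Finset (Fin n)) (s : ∀ i, X i) (a : A) : ℝ :=
  ∑ t ∈ Finset.univ.filter (fun t : ∀ i, X i => ∀ i ∈ I, t i = s i), P t * U a t

/-- Conditional optimizer: actions maximizing conditional expected utility on the `I`-fiber. -/
noncomputable def OptS {n : ℕ} {A : Type*} {X : Fin n → Type*}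
    [∀ i, Fintype (X i)] [∀ i, DecidableEq (X i)]
    (U : A → (∀ i, X i) → ℝ) (P : (∀ i, X i) → ℝ)
    (I : Finset (Fin n)) (s : ∀ i, X i) : Set A :=
  {a | ∀ b, condEU U P I s b ≤ condEU U P I s a}

/-- `I` is statically sufficient: states agreeing on `I` have the same optimizer. -/
def StaticSufficient {n : ℕ} {A : Type*} {X : Fin n → Type*}
    (U : A → (∀ i, X i) → ℝ) (I : Finset (Fin n)) : Prop :=
  ∀ s t : ∀ i, X i, (∀ i ∈ I, s i = t i) → Opt U s = Opt U t

/-- `I` is stochastically sufficient: the conditional optimizer agrees with the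
full-information optimizer at every state. -/
def StochSufficient {n : ℕ} {A : Type*} {X : Fin n → Type*}
    [∀ i, Fintype (X i)] [∀ i, DecidableEq (X i)]
    (U : A → (∀ i, X i) → ℝ) (P : (∀ i, X i) → ℝ) (I : Finset (Fin n)) : Prop :=
  ∀ s : ∀ i, X i, OptS U P I s = Opt U s

/-- `I` is stochastically decisive: every positive-probability state's observed fiber
has a unique conditional optimal action. -/
def StochDecisive {n : ℕ} {A : Type*} {X : Fin n → Type*}
    [∀ i, Fintype (X i)] [∀ i, DecidableEq (X i)]
    (U : A → (∀ i, X i) → ℝ) (P : (∀ i, X i) → ℝ) (I : Finset (Fin n)) : Prop :=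
  ∀ s : ∀ i, X i, 0 < P s → ∃ a : A, OptS U P I s = {a}

lemma condEU_congr {n : ℕ} {A : Type*} {X : Fin n → Type*}
    [∀ i, Fintype (X i)] [∀ i, DecidableEq (X i)]
    (U : A → (∀ i, X i) → ℝ) (P : (∀ i, X i) → ℝ)
    (I : Finset (Fin n)) {s s' : ∀ i, X i} (hs : ∀ i ∈ I, s i = s' i) (a : A) :
    condEU U P I s a = condEU U P I s' a := by
  unfold condEU
  apply Finset.sum_congr _ (fun _ _ => rfl)
  ext t
  simp only [Finset.mem_filter, Finset.mem_univ, true_and]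
  constructor
  · intro h i hi; rw [h i hi, hs i hi]
  · intro h i hi; rw [h i hi, hs i hi]

theorem full_support_anchor_preservation_iff
    {n : ℕ} {A : Type*} {X : Fin n → Type*}
    [Fintype A] [Nonempty A] [∀ i, Fintype (X i)] [∀ i, Nonempty (X i)]
    [∀ i, DecidableEq (X i)]
    (U : A → (∀ i, X i) → ℝ) (P : (∀ i, X i) → ℝ)
    (hP0 : ∀ s, 0 ≤ P s) (hP1 : ∑ s : ∀ i, X i, P s = 1)
    (hfull : ∀ s : ∀ i, X i, 0 < P s)
    (I : Finset (Fin n)) :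
    (∃ s₀ : ∀ i, X i, ∀ s : ∀ i, X i,
        (∀ i ∈ I, s i = s₀ i) → OptS U P I s = Opt U s) ↔
      (∃ s₀ : ∀ i, X i, ∀ s : ∀ i, X i,
        (∀ i ∈ I, s i = s₀ i) → Opt U s = Opt U s₀) := by
  constructor
  · rintro ⟨s₀, h⟩
    exact ⟨s₀, fun s hs => by
      rw [← h s hs, ← h s₀ (fun i _ => rfl)]
      ext a
      constructor <;> intro ha b <;>
        simpa [condEU_congr U P I hs] using ha b⟩
  · rintro ⟨s₀, h⟩
    refine ⟨s₀, fun s hs => ?_⟩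
    have key : OptS U P I s = Opt U s₀ := by
      ext a
      constructor
      · intro ha
        -- pick b maximizing U · s₀
        obtain ⟨b, -, hb⟩ := Finset.exists_max_image Finset.univ (fun a => U a s₀)
          ⟨Classical.arbitrary A, Finset.mem_univ _⟩
        have hbOpt : b ∈ Opt U s₀ := fun c => hb c (Finset.mem_univ c)
        -- b is pointwise optimal on the fiber
        have hpt : ∀ t ∈ Finset.univ.filter
            (fun t : ∀ i, X i => ∀ i ∈ I, t i = s i), ∀ c, U c t ≤ U b t := by
          intro t ht c
          simp only [Finset.mem_filter, Finset.mem_univ, true_and] at ht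
          have : Opt U t = Opt U s₀ := h t (fun i hi => by rw [ht i hi, hs i hi])
          have hb' : b ∈ Opt U t := this ▸ hbOpt
          exact hb' c
        have hle : condEU U P I s b ≤ condEU U P I s a := ha b
        have hterm : ∀ t ∈ Finset.univ.filter
            (fun t : ∀ i, X i => ∀ i ∈ I, t i = s i),
            P t * U a t ≤ P t * U b t := fun t ht =>
          mul_le_mul_of_nonneg_left (hpt t ht a) (hP0 t)
        have heq : ∀ t ∈ Finset.univ.filter
            (fun t : ∀ i, X i => ∀ i ∈ I, t i = s i),
            P t * U a t = P t * U b t := by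
          intro t ht
          by_contra hne
          have hlt : ∑ t ∈ Finset.univ.filter
              (fun t : ∀ i, X i => ∀ i ∈ I, t i = s i), P t * U a t
              < ∑ t ∈ Finset.univ.filter
              (fun t : ∀ i, X i => ∀ i ∈ I, t i = s i), P t * U b t :=
            Finset.sum_lt_sum hterm ⟨t, ht, lt_of_le_of_ne (hterm t ht) hne⟩
          exact absurd hle (not_le.mpr hlt)
        -- hence U a t = U b t on the fiber, so a optimal at s₀
        have hsin : s ∈ Finset.univ.filter
            (fun t : ∀ i, X i => ∀ i ∈ I, t i = s i) := by
          simp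
        have hEq : U a s = U b s :=
          mul_left_cancel₀ (ne_of_gt (hfull s)) (heq s hsin)
        have haOpt : a ∈ Opt U s := fun c => (hpt s hsin c).trans hEq.symm.le
        exact (h s hs) ▸ haOpt
      · intro ha b
        unfold condEU
        apply Finset.sum_le_sum
        intro t ht
        simp only [Finset.mem_filter, Finset.mem_univ, true_and] at ht
        have : Opt U t = Opt U s₀ := h t (fun i hi => by rw [ht i hi, hs i hi])
        have ha' : a ∈ Opt U t := this ▸ ha
        exact mul_le_mul_of_nonneg_left (ha' b) (hP0 t)
    rw [key, h s hs]
end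

section
/- Suppose there is an anchor state s₀ such that Opt(s) = Opt(s₀) for every state s agreeing with s₀ on I, and the anchor fiber contains a positive-probability state, i.e., there exists t agreeing with s₀ on I with P(t) > 0. Then OptS_I(s) = Opt(s) for every state s agreeing with s₀ on I; in particular I is stochastically anchor-preserving. -/
/-! On the anchor fiber every state has the same optimal set `O`, which is nonempty since `A` is
finite. An action in `O` is optimal pointwise on the fiber, so it maximizes the fiber-weighted sum.
Conversely a conditional maximizer `a` ties in expectation with some `a₀ ∈ O` that dominates it
pointwise, so the two agree wherever `P > 0`; at the positive-probability state `t` this makes `a`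
optimal, i.e. `a ∈ Opt U t = O`. -/

theorem Opt_nonempty {n : ℕ} {A : Type*} {X : Fin n → Type*} [Finite A] [Nonempty A]
    (U : A → (∀ i, X i) → ℝ) (s : ∀ i, X i) : (Opt U s).Nonempty :=
  Finite.exists_max (U · s)

section Conditional

variable {n : ℕ} {A : Type*} {X : Fin n → Type*} [∀ i, Fintype (X i)] [∀ i, DecidableEq (X i)]
  {U : A → (∀ i, X i) → ℝ} {P : (∀ i, X i) → ℝ} {I : Finset (Fin n)} {s : ∀ i, X i}

theorem condEU_le_condEU (hP0 : ∀ t, 0 ≤ P t) {a b : A}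
    (hle : ∀ t, (∀ i ∈ I, t i = s i) → U b t ≤ U a t) :
    condEU U P I s b ≤ condEU U P I s a :=
  Finset.sum_le_sum fun t ht =>
    mul_le_mul_of_nonneg_left (hle t (Finset.mem_filter.mp ht).2) (hP0 t)

theorem apply_eq_of_condEU_le_condEU (hP0 : ∀ t, 0 ≤ P t) {a b : A}
    (hle : ∀ t, (∀ i ∈ I, t i = s i) → U b t ≤ U a t)
    (hcond : condEU U P I s a ≤ condEU U P I s b)
    {t : ∀ i, X i} (ht : ∀ i ∈ I, t i = s i) (hPt : 0 < P t) : U b t = U a t := by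
  have hterm : ∀ t ∈ Finset.univ.filter (fun t : ∀ i, X i => ∀ i ∈ I, t i = s i),
      P t * U b t ≤ P t * U a t := fun t ht =>
    mul_le_mul_of_nonneg_left (hle t (Finset.mem_filter.mp ht).2) (hP0 t)
  have hsum : condEU U P I s b = condEU U P I s a :=
    le_antisymm (condEU_le_condEU hP0 hle) hcond
  exact mul_left_cancel₀ hPt.ne' <|
    (Finset.sum_eq_sum_iff_of_le hterm).mp hsum t (Finset.mem_filter.mpr ⟨Finset.mem_univ t, ht⟩)

theorem OptS_eq_of_forall_Opt_eq (hP0 : ∀ t, 0 ≤ P t) {O : Set A} (hO : O.Nonempty)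
    (hfiber : ∀ t, (∀ i ∈ I, t i = s i) → Opt U t = O)
    (hpos : ∃ t, (∀ i ∈ I, t i = s i) ∧ 0 < P t) : OptS U P I s = O := by
  have hopt : ∀ a ∈ O, ∀ t, (∀ i ∈ I, t i = s i) → ∀ b, U b t ≤ U a t := fun a ha t ht => by
    rw [← hfiber t ht] at ha
    exact ha
  obtain ⟨a₀, ha₀⟩ := hO
  obtain ⟨t₀, ht₀, hPt₀⟩ := hpos
  ext a
  constructor
  · intro ha
    have htie : U a t₀ = U a₀ t₀ :=
      apply_eq_of_condEU_le_condEU hP0 (fun t ht => hopt a₀ ha₀ t ht a) (ha a₀) ht₀ hPt₀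
    rw [← hfiber t₀ ht₀]
    exact fun b => htie ▸ hopt a₀ ha₀ t₀ ht₀ b
  · exact fun ha b => condEU_le_condEU hP0 fun t ht => hopt a ha t ht b

end Conditional

theorem static_anchor_positive_fiber_implies_stochastic_anchor_general
    {n : ℕ} {A : Type*} {X : Fin n → Type*}
    [Fintype A] [Nonempty A] [∀ i, Fintype (X i)]
    [∀ i, DecidableEq (X i)]
    (U : A → (∀ i, X i) → ℝ) (P : (∀ i, X i) → ℝ)
    (hP0 : ∀ s, 0 ≤ P s)
    (I : Finset (Fin n)) (s₀ : ∀ i, X i)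
    (hanchor : ∀ s : ∀ i, X i, (∀ i ∈ I, s i = s₀ i) → Opt U s = Opt U s₀)
    (hpos : ∃ t : ∀ i, X i, (∀ i ∈ I, t i = s₀ i) ∧ 0 < P t) :
    (∀ s : ∀ i, X i, (∀ i ∈ I, s i = s₀ i) → OptS U P I s = Opt U s) ∧
      (∃ s₁ : ∀ i, X i, ∀ s : ∀ i, X i,
        (∀ i ∈ I, s i = s₁ i) → OptS U P I s = Opt U s) := by
  have hmain : ∀ s : ∀ i, X i, (∀ i ∈ I, s i = s₀ i) → OptS U P I s = Opt U s := by
    intro s hs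
    have hfiber : ∀ t, (∀ i ∈ I, t i = s i) → Opt U t = Opt U s₀ := fun t ht =>
      hanchor t fun i hi => (ht i hi).trans (hs i hi)
    rw [hanchor s hs]
    obtain ⟨t, ht, hPt⟩ := hpos
    exact OptS_eq_of_forall_Opt_eq hP0 (Opt_nonempty U s₀) hfiber
      ⟨t, fun i hi => (ht i hi).trans (hs i hi).symm, hPt⟩
  exact ⟨hmain, s₀, hmain⟩

theorem static_anchor_positive_fiber_implies_stochastic_anchor
    {n : ℕ} {A : Type*} {X : Fin n → Type*}
    [Fintype A] [Nonempty A] [∀ i, Fintype (X i)] [∀ i, Nonempty (X i)]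
    [∀ i, DecidableEq (X i)]
    (U : A → (∀ i, X i) → ℝ) (P : (∀ i, X i) → ℝ)
    (hP0 : ∀ s, 0 ≤ P s) (hP1 : ∑ s : ∀ i, X i, P s = 1)
    (I : Finset (Fin n)) (s₀ : ∀ i, X i)
    (hanchor : ∀ s : ∀ i, X i, (∀ i ∈ I, s i = s₀ i) → Opt U s = Opt U s₀)
    (hpos : ∃ t : ∀ i, X i, (∀ i ∈ I, t i = s₀ i) ∧ 0 < P t) :
    (∀ s : ∀ i, X i, (∀ i ∈ I, s i = s₀ i) → OptS U P I s = Opt U s) ∧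
      (∃ s₁ : ∀ i, X i, ∀ s : ∀ i, X i,
        (∀ i ∈ I, s i = s₁ i) → OptS U P I s = Opt U s) :=
  static_anchor_positive_fiber_implies_stochastic_anchor_general U P hP0 I s₀ hanchor hpos
end
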